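/- With p_z and q_z as above, for \lambda in the real quadratic space V of trace-zero matrices with Q(\lambda) = -N\det(\lambda) and z in the upper half plane, the identities |p_z(\lambda)|^2 = -2 Q(\lambda_z) and |q_z(\lambda)|^2 = 2 y^2 Q(\lambda_{z^{\perp}}) hold, where \lambda = \lambda_z + \lambda_{z^{\perp}} is the orthogonal decomposition with respect to the negative line z \in Gr(V(\mathbb{R})) corresponding to the point z of the upper half plane. -/

import Mathlib

/-!
Since `Q(λ(z)) = -1/2`, the first identity is just `Q(t λ(z)) = t² Q(λ(z))`. For the second,
polarization along the trace-zero vector `λ(z)` gives `Q(λ_{z^⊥}) = Q(λ) + p_z(λ)² / 2`.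
Writing `λ = (a, b; c, -a)`, both sides then equal `N/2` times
`|c z² - 2 a z - b|² = (c |z|² - 2 a x - b)² + 4 y² (a² + b c)`.
-/

open Matrix

/-- The bilinear form `(λ, μ) = N tr(λμ)` on 2×2 real matrices. -/
noncomputable def Bform (N : ℕ) (lam mu : Matrix (Fin 2) (Fin 2) ℝ) : ℝ :=
  (N : ℝ) * (lam * mu).trace

/-- The quadratic form `Q(λ) = -N det λ`. -/
noncomputable def Qform (N : ℕ) (lam : Matrix (Fin 2) (Fin 2) ℝ) : ℝ :=
  -(N : ℝ) * lam.det

/-- The vector `λ(z) = (1/(√(2N) y)) (-x, x²+y²; -1, x)` spanning the negative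
line of `Gr(V(ℝ))` corresponding to `z = x + iy ∈ ℍ`. -/
noncomputable def lamvec (N : ℕ) (x y : ℝ) : Matrix (Fin 2) (Fin 2) ℝ :=
  (1 / (Real.sqrt (2 * N) * y)) • !![-x, x ^ 2 + y ^ 2; -1, x]

/-- `q_z(λ) = -(1/√(2N)) (cN z² - b z + a)` for `λ = (b/2N, -a/N; c, -b/2N)`. -/
noncomputable def qz (N : ℕ) (z : ℂ) (lam : Matrix (Fin 2) (Fin 2) ℝ) : ℂ :=
  (-1 / (Real.sqrt (2 * N) : ℂ)) *
    ((lam 1 0 : ℝ) * (N : ℂ) * z ^ 2 - (2 * (N : ℝ) * lam 0 0 : ℝ) * z + (-(N : ℝ) * lam 0 1 : ℝ))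

section TwoByTwo

variable {N : ℕ} {A B : Matrix (Fin 2) (Fin 2) ℝ}

lemma entry_one_one_of_trace_eq_zero (hA : A.trace = 0) : A 1 1 = -A 0 0 := by
  rw [trace_fin_two] at hA
  linarith

lemma Qform_smul (t : ℝ) (A : Matrix (Fin 2) (Fin 2) ℝ) :
    Qform N (t • A) = t ^ 2 * Qform N A := by
  simp only [Qform, det_smul, Fintype.card_fin]
  ring

lemma Bform_smul_right (t : ℝ) (A B : Matrix (Fin 2) (Fin 2) ℝ) :
    Bform N A (t • B) = t * Bform N A B := by
  simp only [Bform, mul_smul_comm, trace_smul, smul_eq_mul]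
  ring

-- For 2×2 matrices `det (A - B) = det A + det B - tr A tr B + tr (A B)`.
lemma Qform_sub_of_trace_eq_zero (hB : B.trace = 0) :
    Qform N (A - B) = Qform N A + Qform N B - Bform N A B := by
  rw [trace_fin_two] at hB
  simp only [Qform, Bform, det_fin_two, trace_fin_two, mul_apply, Fin.sum_univ_two,
    Matrix.sub_apply]
  linear_combination (N : ℝ) * (A 0 0 + A 1 1) * hB

lemma Qform_of_trace_eq_zero (hA : A.trace = 0) :
    Qform N A = N * (A 0 0 ^ 2 + A 0 1 * A 1 0) := by
  rw [Qform, det_fin_two, entry_one_one_of_trace_eq_zero hA]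
  ring

end TwoByTwo

lemma trace_lamvec (N : ℕ) (x y : ℝ) : (lamvec N x y).trace = 0 := by
  simp [lamvec, trace_fin_two]

lemma Qform_lamvec {N : ℕ} (hN : N ≠ 0) (x : ℝ) {y : ℝ} (hy : y ≠ 0) :
    Qform N (lamvec N x y) = -1 / 2 := by
  have hs : Real.sqrt (2 * N) ^ 2 = 2 * N := Real.sq_sqrt (by positivity)
  have hs0 : Real.sqrt (2 * N) ≠ 0 := by positivity
  rw [lamvec, Qform_smul, Qform, det_fin_two_of]
  field_simp
  linear_combination y ^ 2 * hs

lemma sq_mul_Bform_lamvec_sq {N : ℕ} (hN : N ≠ 0) (x : ℝ) {y : ℝ} (hy : y ≠ 0)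
    {lam : Matrix (Fin 2) (Fin 2) ℝ} (hlam : lam.trace = 0) :
    y ^ 2 * Bform N lam (lamvec N x y) ^ 2
      = N / 2 * (lam 1 0 * (x ^ 2 + y ^ 2) - 2 * lam 0 0 * x - lam 0 1) ^ 2 := by
  have hs : Real.sqrt (2 * N) ^ 2 = 2 * N := Real.sq_sqrt (by positivity)
  have hs0 : Real.sqrt (2 * N) ≠ 0 := by positivity
  simp only [Bform, lamvec, mul_smul_comm, trace_smul, smul_eq_mul, trace_fin_two, mul_apply,
    Fin.sum_univ_two, of_apply, cons_val', cons_val_zero, cons_val_one, cons_val_fin_one,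
    entry_one_one_of_trace_eq_zero hlam]
  generalize Real.sqrt (2 * N) = s at hs hs0 ⊢
  field_simp
  rw [hs]
  ring

lemma normSq_quadratic (a b c : ℝ) (z : ℂ) :
    Complex.normSq (c * z ^ 2 - 2 * a * z - b)
      = (c * Complex.normSq z - 2 * a * z.re - b) ^ 2 + 4 * z.im ^ 2 * (a ^ 2 + b * c) := by
  simp only [Complex.normSq_apply, pow_two, Complex.mul_re, Complex.mul_im, Complex.sub_re,
    Complex.sub_im, Complex.ofReal_re, Complex.ofReal_im, Complex.re_ofNat, Complex.im_ofNat]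
  ring

lemma sq_norm_qz (N : ℕ) (z : ℂ) (lam : Matrix (Fin 2) (Fin 2) ℝ) :
    ‖qz N z lam‖ ^ 2
      = N / 2 * Complex.normSq (lam 1 0 * z ^ 2 - 2 * lam 0 0 * z - lam 0 1) := by
  have hqz : qz N z lam
      = (-(N / Real.sqrt (2 * N)) : ℝ) * (lam 1 0 * z ^ 2 - 2 * lam 0 0 * z - lam 0 1) := by
    simp only [qz]
    push_cast
    ring
  rw [hqz, Complex.sq_norm, Complex.normSq_mul, Complex.normSq_ofReal, neg_mul_neg,
    div_mul_div_comm, ← sq, ← sq, Real.sq_sqrt (by positivity)]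
  rcases eq_or_ne (N : ℝ) 0 with hN | hN
  · simp [hN]
  · field_simp

/-- `λ_z = -(λ, λ(z)) • λ(z)` is the orthogonal projection onto the negative line `z`
(as `(λ(z), λ(z)) = -1`), `λ_{z^⊥} = λ - λ_z`, and `p_z(λ) = -(λ, λ(z))`. -/
theorem pz_qz_norms (N : ℕ) (hN : 0 < N) (x y : ℝ) (hy : 0 < y)
    (lam : Matrix (Fin 2) (Fin 2) ℝ) (hlam : lam.trace = 0) :
    (-(Bform N lam (lamvec N x y))) ^ 2
        = -2 * Qform N ((-(Bform N lam (lamvec N x y))) • lamvec N x y) ∧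
    ‖qz N (Complex.mk x y) lam‖ ^ 2
        = 2 * y ^ 2 * Qform N (lam - (-(Bform N lam (lamvec N x y))) • lamvec N x y) := by
  set t := -Bform N lam (lamvec N x y) with ht
  have hQv := Qform_lamvec hN.ne' x hy.ne'
  refine ⟨by rw [Qform_smul, hQv]; ring, ?_⟩
  have hQperp : Qform N (lam - t • lamvec N x y) = Qform N lam + t ^ 2 / 2 := by
    rw [Qform_sub_of_trace_eq_zero (by rw [trace_smul, trace_lamvec, smul_zero]),
      Qform_smul, hQv, Bform_smul_right, ht]
    ring
  have hB := sq_mul_Bform_lamvec_sq hN.ne' x hy.ne' hlam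
  rw [hQperp, sq_norm_qz, normSq_quadratic, Qform_of_trace_eq_zero hlam, Complex.normSq_mk]
  simp only [ht, neg_sq] at hB ⊢
  linear_combination -hB
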